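/- Naturality of the obstruction map: if φ: A₂ → A₁ is an augmentation-preserving homomorphism of finite dimensional local K-algebras, λ₂ a deformation of L with base A₂, and λ₁ = φ_*λ₂, then θ_{λ₁} = θ_{λ₂} ∘ φ*, i.e., the diagram H²_Harr(A₁;K) → H²_Harr(A₂;K) → HL³(L;L) commutes with θ_{λ₁}: H²_Harr(A₁;K) → HL³(L;L). -/

import Mathlib

open TensorProduct

noncomputable def reduceTensor {K A L : Type*} [Field K] [CommRing A] [Algebra K A]
    [AddCommGroup L] [Module K L] (ξ : A →ₗ[K] K) :
    A ⊗[K] L →ₗ[K] L :=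
  (TensorProduct.lid K L).toLinearMap.comp (TensorProduct.map ξ LinearMap.id)

lemma reduceTensor_tmul {K A L : Type*} [Field K] [CommRing A] [Algebra K A]
    [AddCommGroup L] [Module K L] (ξ : A →ₗ[K] K) (a : A) (m : L) :
    reduceTensor ξ (a ⊗ₜ[K] m) = ξ a • m := by
  simp [reduceTensor]

lemma ker_tensor_classify {K B A L : Type*} [Field K] [CommRing B] [Algebra K B]
    [CommRing A] [Algebra K A] [AddCommGroup L] [Module K L]
    (i : K →ₗ[K] B) (p : B →ₐ[K] A)
    (hexact : LinearMap.range i = LinearMap.ker p.toLinearMap)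
    (u : B ⊗[K] L)
    (hu : TensorProduct.map p.toLinearMap LinearMap.id u = 0) :
    ∃ m : L, u = i 1 ⊗ₜ[K] m := by
  have hex : Function.Exact i p.toLinearMap := LinearMap.exact_iff.mpr hexact.symm
  have hex2 : Function.Exact (i.rTensor L) (p.toLinearMap.rTensor L) :=
    Module.Flat.rTensor_exact L hex
  have h0 : p.toLinearMap.rTensor L u = 0 := hu
  obtain ⟨v, hv⟩ := (hex2 u).mp h0
  refine ⟨TensorProduct.lid K L v, ?_⟩
  have hv2 : v = (1 : K) ⊗ₜ[K] (TensorProduct.lid K L v) := by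
    rw [← TensorProduct.lid_symm_apply]
    exact ((TensorProduct.lid K L).symm_apply_apply v).symm
  rw [← hv]
  conv_lhs => rw [hv2]
  rw [LinearMap.rTensor_tmul]

lemma aux_reduce_comp {K A B L : Type*} [Field K] [CommRing A] [Algebra K A]
    [CommRing B] [Algebra K B] [AddCommGroup L] [Module K L]
    (ε : A →ₐ[K] K) (p : B →ₐ[K] A) (u : B ⊗[K] L) :
    reduceTensor (ε.comp p).toLinearMap u
      = reduceTensor ε.toLinearMap (TensorProduct.map p.toLinearMap LinearMap.id u) := by
  induction u using TensorProduct.induction_on with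
  | zero => simp
  | tmul b m => simp [reduceTensor_tmul]
  | add x y hx hy => simp only [map_add, hx, hy]

lemma aux_smul_ker {K A B L : Type*} [Field K] [CommRing A] [Algebra K A]
    [CommRing B] [Algebra K B] [AddCommGroup L] [Module K L]
    (ε : A →ₐ[K] K) (i : K →ₗ[K] B) (p : B →ₐ[K] A)
    (hmod : ∀ (k : K) (b : B), i k * b = i (ε (p b) * k))
    (u : B ⊗[K] L) :
    i 1 • u = i 1 ⊗ₜ[K] reduceTensor (ε.comp p).toLinearMap u := by
  induction u using TensorProduct.induction_on with
  | zero => simp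
  | tmul b m =>
      rw [reduceTensor_tmul]
      have h1 : i 1 • (b ⊗ₜ[K] m) = (i 1 * b) ⊗ₜ[K] m := by
        rw [TensorProduct.smul_tmul', smul_eq_mul]
      have h2 : i (ε (p b)) = ε (p b) • i 1 := by
        rw [← map_smul, smul_eq_mul, mul_one]
      rw [h1, hmod, mul_one, h2, TensorProduct.smul_tmul]
      simp
  | add x y hx hy => rw [smul_add, hx, hy, map_add, ← TensorProduct.tmul_add]
/-- Naturality of the obstruction map `θ_λ : H²_Harr(A;K) → HL³(L;L)`:
if `φ : A₂ → A₁` is an augmentation-preserving homomorphism of finite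
dimensional local algebras, `λ₂` a deformation of `L` with base `A₂` and
`λ₁ = φ_*λ₂`, then `θ_{λ₁} = θ_{λ₂} ∘ φ*`.  Concretely: for 1-dimensional
extensions `Bₖ` of `Aₖ` related by a morphism `ψ : B₂ → B₁` over `φ`
(so that `[B₂] = φ*[B₁]` in Harrison cohomology), the obstruction
cocycles `φ̄₁` and `φ̄₂` of any liftings of `λ₁` resp. `λ₂` are cohomologous. -/
theorem obstruction_map_natural {K A₁ A₂ B₁ B₂ L : Type*} [Field K]
    [CommRing A₁] [Algebra K A₁] [FiniteDimensional K A₁] [IsLocalRing A₁]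
    [CommRing A₂] [Algebra K A₂] [FiniteDimensional K A₂] [IsLocalRing A₂]
    [CommRing B₁] [Algebra K B₁] [CommRing B₂] [Algebra K B₂]
    [AddCommGroup L] [Module K L]
    (bll : L → L → L)
    (h_add_left : ∀ x y z : L, bll (x + y) z = bll x z + bll y z)
    (h_add_right : ∀ x y z : L, bll x (y + z) = bll x y + bll x z)
    (h_smul_left : ∀ (c : K) (x y : L), bll (c • x) y = c • bll x y)
    (h_smul_right : ∀ (c : K) (x y : L), bll x (c • y) = c • bll x y)
    (h_leibniz : ∀ x y z : L, bll x (bll y z) = bll (bll x y) z - bll (bll x z) y)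
    -- the augmentations and the homomorphism φ : A₂ → A₁ with ε₁ ∘ φ = ε₂
    (ε₁ : A₁ →ₐ[K] K) (ε₂ : A₂ →ₐ[K] K)
    (φ : A₂ →ₐ[K] A₁) (hφε : ε₁.comp φ = ε₂)
    -- the deformation λ₂ with base A₂
    (brA₂ : A₂ ⊗[K] L → A₂ ⊗[K] L → A₂ ⊗[K] L)
    (hbrA₂_add_left : ∀ x y z, brA₂ (x + y) z = brA₂ x z + brA₂ y z)
    (hbrA₂_add_right : ∀ x y z, brA₂ x (y + z) = brA₂ x y + brA₂ x z)
    (hbrA₂_smul_left : ∀ (a : A₂) x y, brA₂ (a • x) y = a • brA₂ x y)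
    (hbrA₂_smul_right : ∀ (a : A₂) x y, brA₂ x (a • y) = a • brA₂ x y)
    (hbrA₂_leibniz : ∀ x y z, brA₂ x (brA₂ y z) = brA₂ (brA₂ x y) z - brA₂ (brA₂ x z) y)
    (hcompatA₂ : ∀ x y,
      reduceTensor ε₂.toLinearMap (brA₂ x y)
        = bll (reduceTensor ε₂.toLinearMap x) (reduceTensor ε₂.toLinearMap y))
    -- the push-out λ₁ = φ_*λ₂ with base A₁
    (brA₁ : A₁ ⊗[K] L → A₁ ⊗[K] L → A₁ ⊗[K] L)
    (hbrA₁_add_left : ∀ x y z, brA₁ (x + y) z = brA₁ x z + brA₁ y z)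
    (hbrA₁_add_right : ∀ x y z, brA₁ x (y + z) = brA₁ x y + brA₁ x z)
    (hbrA₁_smul_left : ∀ (a : A₁) x y, brA₁ (a • x) y = a • brA₁ x y)
    (hbrA₁_smul_right : ∀ (a : A₁) x y, brA₁ x (a • y) = a • brA₁ x y)
    (hbrA₁_leibniz : ∀ x y z, brA₁ x (brA₁ y z) = brA₁ (brA₁ x y) z - brA₁ (brA₁ x z) y)
    (hcompatA₁ : ∀ x y,
      reduceTensor ε₁.toLinearMap (brA₁ x y)
        = bll (reduceTensor ε₁.toLinearMap x) (reduceTensor ε₁.toLinearMap y))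
    (hpushout : ∀ l₁ l₂ : L,
      brA₁ ((1 : A₁) ⊗ₜ[K] l₁) ((1 : A₁) ⊗ₜ[K] l₂)
        = TensorProduct.map φ.toLinearMap LinearMap.id
            (brA₂ ((1 : A₂) ⊗ₜ[K] l₁) ((1 : A₂) ⊗ₜ[K] l₂)))
    -- the two 1-dimensional extensions 0 → K → Bₖ → Aₖ → 0
    (i₁ : K →ₗ[K] B₁) (p₁ : B₁ →ₐ[K] A₁)
    (hi₁_inj : Function.Injective i₁) (hp₁_surj : Function.Surjective p₁)
    (hexact₁ : LinearMap.range i₁ = LinearMap.ker p₁.toLinearMap)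
    (hmod₁ : ∀ (k : K) (b : B₁), i₁ k * b = i₁ (ε₁ (p₁ b) * k))
    (i₂ : K →ₗ[K] B₂) (p₂ : B₂ →ₐ[K] A₂)
    (hi₂_inj : Function.Injective i₂) (hp₂_surj : Function.Surjective p₂)
    (hexact₂ : LinearMap.range i₂ = LinearMap.ker p₂.toLinearMap)
    (hmod₂ : ∀ (k : K) (b : B₂), i₂ k * b = i₂ (ε₂ (p₂ b) * k))
    -- a morphism of extensions ψ over φ (so the class of B₂ is φ* of that of B₁)
    (ψ : B₂ →ₐ[K] B₁)
    (hψp : ∀ b : B₂, p₁ (ψ b) = φ (p₂ b))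
    (hψi : ∀ k : K, ψ (i₂ k) = i₁ k)
    -- liftings of λ₁ and λ₂ and their obstruction cocycles
    (br₁ : B₁ ⊗[K] L → B₁ ⊗[K] L → B₁ ⊗[K] L)
    (hbr₁_add_left : ∀ x y z, br₁ (x + y) z = br₁ x z + br₁ y z)
    (hbr₁_add_right : ∀ x y z, br₁ x (y + z) = br₁ x y + br₁ x z)
    (hbr₁_smul_left : ∀ (b : B₁) x y, br₁ (b • x) y = b • br₁ x y)
    (hbr₁_smul_right : ∀ (b : B₁) x y, br₁ x (b • y) = b • br₁ x y)
    (hlift₁ : ∀ x y : B₁ ⊗[K] L,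
      TensorProduct.map p₁.toLinearMap LinearMap.id (br₁ x y)
        = brA₁ (TensorProduct.map p₁.toLinearMap LinearMap.id x)
               (TensorProduct.map p₁.toLinearMap LinearMap.id y))
    (hII₁ : ∀ (l : L) (x : B₁ ⊗[K] L),
      br₁ (i₁ 1 ⊗ₜ[K] l) x = i₁ 1 ⊗ₜ[K] bll l (reduceTensor (ε₁.comp p₁).toLinearMap x))
    (br₂ : B₂ ⊗[K] L → B₂ ⊗[K] L → B₂ ⊗[K] L)
    (hbr₂_add_left : ∀ x y z, br₂ (x + y) z = br₂ x z + br₂ y z)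
    (hbr₂_add_right : ∀ x y z, br₂ x (y + z) = br₂ x y + br₂ x z)
    (hbr₂_smul_left : ∀ (b : B₂) x y, br₂ (b • x) y = b • br₂ x y)
    (hbr₂_smul_right : ∀ (b : B₂) x y, br₂ x (b • y) = b • br₂ x y)
    (hlift₂ : ∀ x y : B₂ ⊗[K] L,
      TensorProduct.map p₂.toLinearMap LinearMap.id (br₂ x y)
        = brA₂ (TensorProduct.map p₂.toLinearMap LinearMap.id x)
               (TensorProduct.map p₂.toLinearMap LinearMap.id y))
    (hII₂ : ∀ (l : L) (x : B₂ ⊗[K] L),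
      br₂ (i₂ 1 ⊗ₜ[K] l) x = i₂ 1 ⊗ₜ[K] bll l (reduceTensor (ε₂.comp p₂).toLinearMap x))
    (φb₁ φb₂ : L → L → L → L)
    (hφb₁ : ∀ l₁ l₂ l₃ : L,
      i₁ 1 ⊗ₜ[K] φb₁ l₁ l₂ l₃
        = br₁ ((1 : B₁) ⊗ₜ[K] l₁) (br₁ ((1 : B₁) ⊗ₜ[K] l₂) ((1 : B₁) ⊗ₜ[K] l₃))
          - br₁ (br₁ ((1 : B₁) ⊗ₜ[K] l₁) ((1 : B₁) ⊗ₜ[K] l₂)) ((1 : B₁) ⊗ₜ[K] l₃)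
          + br₁ (br₁ ((1 : B₁) ⊗ₜ[K] l₁) ((1 : B₁) ⊗ₜ[K] l₃)) ((1 : B₁) ⊗ₜ[K] l₂))
    (hφb₂ : ∀ l₁ l₂ l₃ : L,
      i₂ 1 ⊗ₜ[K] φb₂ l₁ l₂ l₃
        = br₂ ((1 : B₂) ⊗ₜ[K] l₁) (br₂ ((1 : B₂) ⊗ₜ[K] l₂) ((1 : B₂) ⊗ₜ[K] l₃))
          - br₂ (br₂ ((1 : B₂) ⊗ₜ[K] l₁) ((1 : B₂) ⊗ₜ[K] l₂)) ((1 : B₂) ⊗ₜ[K] l₃)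
          + br₂ (br₂ ((1 : B₂) ⊗ₜ[K] l₁) ((1 : B₂) ⊗ₜ[K] l₃)) ((1 : B₂) ⊗ₜ[K] l₂)) :
    -- θ_{λ₁}([B₁]) = θ_{λ₂}(φ*[B₁]) : the obstruction cocycles are cohomologous
    ∃ g : L → L → L,
      (∀ x y z : L, g (x + y) z = g x z + g y z)
      ∧ (∀ x y z : L, g x (y + z) = g x y + g x z)
      ∧ (∀ (c : K) (x y : L), g (c • x) y = c • g x y)
      ∧ (∀ (c : K) (x y : L), g x (c • y) = c • g x y)
      ∧ (∀ l₁ l₂ l₃ : L,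
          φb₁ l₁ l₂ l₃ - φb₂ l₁ l₂ l₃
            = bll l₁ (g l₂ l₃) + bll (g l₁ l₃) l₂ - bll (g l₁ l₂) l₃
              - g (bll l₁ l₂) l₃ + g (bll l₁ l₃) l₂ + g l₁ (bll l₂ l₃)) := by
  classical
  -- abbreviations (as plain terms)
  -- K-scalar versions of the bracket multiplicativity
  have hbr₁_ksmul_left : ∀ (c : K) x y, br₁ (c • x) y = c • br₁ x y := by
    intro c x y
    rw [← algebraMap_smul B₁ c x, hbr₁_smul_left, algebraMap_smul]
  have hbr₁_ksmul_right : ∀ (c : K) x y, br₁ x (c • y) = c • br₁ x y := by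
    intro c x y
    rw [← algebraMap_smul B₁ c y, hbr₁_smul_right, algebraMap_smul]
  have hbr₂_ksmul_left : ∀ (c : K) x y, br₂ (c • x) y = c • br₂ x y := by
    intro c x y
    rw [← algebraMap_smul B₂ c x, hbr₂_smul_left, algebraMap_smul]
  have hbr₂_ksmul_right : ∀ (c : K) x y, br₂ x (c • y) = c • br₂ x y := by
    intro c x y
    rw [← algebraMap_smul B₂ c y, hbr₂_smul_right, algebraMap_smul]
  -- zero lemmas
  have hbr₁_zero_right : ∀ x, br₁ x 0 = 0 := by
    intro x
    have h := hbr₁_add_right x 0 0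
    rw [add_zero] at h
    exact (add_eq_right.mp h.symm)
  have hbr₂_zero_right : ∀ x, br₂ x 0 = 0 := by
    intro x
    have h := hbr₂_add_right x 0 0
    rw [add_zero] at h
    exact (add_eq_right.mp h.symm)
  have hbr₁_zero_left : ∀ x, br₁ 0 x = 0 := by
    intro x
    have h := hbr₁_add_left 0 0 x
    rw [add_zero] at h
    exact (add_eq_right.mp h.symm)
  have hbr₂_zero_left : ∀ x, br₂ 0 x = 0 := by
    intro x
    have h := hbr₂_add_left 0 0 x
    rw [add_zero] at h
    exact (add_eq_right.mp h.symm)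
  -- the reductions r₁, r₂ intertwine brackets and bll
  have hr₁br : ∀ x y, reduceTensor (ε₁.comp p₁).toLinearMap (br₁ x y)
      = bll (reduceTensor (ε₁.comp p₁).toLinearMap x)
            (reduceTensor (ε₁.comp p₁).toLinearMap y) := by
    intro x y
    rw [aux_reduce_comp, hlift₁, hcompatA₁, ← aux_reduce_comp, ← aux_reduce_comp]
  have hr₂br : ∀ x y, reduceTensor (ε₂.comp p₂).toLinearMap (br₂ x y)
      = bll (reduceTensor (ε₂.comp p₂).toLinearMap x)
            (reduceTensor (ε₂.comp p₂).toLinearMap y) := by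
    intro x y
    rw [aux_reduce_comp, hlift₂, hcompatA₂, ← aux_reduce_comp, ← aux_reduce_comp]
  have hr₁t : ∀ l : L, reduceTensor (ε₁.comp p₁).toLinearMap ((1:B₁) ⊗ₜ[K] l) = l := by
    intro l; rw [reduceTensor_tmul]; simp
  have hr₂t : ∀ l : L, reduceTensor (ε₂.comp p₂).toLinearMap ((1:B₂) ⊗ₜ[K] l) = l := by
    intro l; rw [reduceTensor_tmul]; simp
  -- bracket against kernel elements on the right
  have hbrR₁ : ∀ (x : B₁ ⊗[K] L) (l : L),
      br₁ x (i₁ 1 ⊗ₜ[K] l)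
        = i₁ 1 ⊗ₜ[K] bll (reduceTensor (ε₁.comp p₁).toLinearMap x) l := by
    intro x l
    have h0 : i₁ 1 ⊗ₜ[K] l = i₁ 1 • ((1:B₁) ⊗ₜ[K] l) := by
      rw [aux_smul_ker ε₁ i₁ p₁ hmod₁, hr₁t]
    rw [h0, hbr₁_smul_right, aux_smul_ker ε₁ i₁ p₁ hmod₁, hr₁br, hr₁t]
  -- the projection of B₁ kills kernel-smul:
  have hbsm₁ : ∀ (b : B₁) (m : L),
      b • (i₁ 1 ⊗ₜ[K] m) = i₁ 1 ⊗ₜ[K] (ε₁ (p₁ b) • m) := by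
    intro b m
    have h1 : b • (i₁ 1 ⊗ₜ[K] m) = (b * i₁ 1) ⊗ₜ[K] m := by
      rw [TensorProduct.smul_tmul', smul_eq_mul]
    have h2 : i₁ (ε₁ (p₁ b)) = ε₁ (p₁ b) • i₁ 1 := by
      rw [← map_smul, smul_eq_mul, mul_one]
    rw [h1, mul_comm, hmod₁, mul_one, h2, TensorProduct.smul_tmul]
  -- properties of Ψ = map ψ id
  have hΨsmul : ∀ (b : B₂) (u : B₂ ⊗[K] L),
      TensorProduct.map ψ.toLinearMap LinearMap.id (b • u)
        = ψ b • TensorProduct.map ψ.toLinearMap LinearMap.id u := by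
    intro b u
    induction u using TensorProduct.induction_on with
    | zero => simp
    | tmul c m =>
        simp only [TensorProduct.smul_tmul', smul_eq_mul, TensorProduct.map_tmul,
          AlgHom.toLinearMap_apply, map_mul, LinearMap.id_coe, id_eq]
    | add x y hx hy => simp only [smul_add, map_add, hx, hy]
  have hΨone : ∀ l : L, TensorProduct.map ψ.toLinearMap LinearMap.id ((1:B₂) ⊗ₜ[K] l)
      = (1:B₁) ⊗ₜ[K] l := by
    intro l; simp
  have hΨe : ∀ l : L, TensorProduct.map ψ.toLinearMap LinearMap.id (i₂ 1 ⊗ₜ[K] l)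
      = i₁ 1 ⊗ₜ[K] l := by
    intro l
    simp only [TensorProduct.map_tmul, AlgHom.toLinearMap_apply, hψi,
      LinearMap.id_coe, id_eq]
  have hPΨ : ∀ u : B₂ ⊗[K] L,
      TensorProduct.map p₁.toLinearMap LinearMap.id
          (TensorProduct.map ψ.toLinearMap LinearMap.id u)
        = TensorProduct.map φ.toLinearMap LinearMap.id
            (TensorProduct.map p₂.toLinearMap LinearMap.id u) := by
    intro u
    induction u using TensorProduct.induction_on with
    | zero => simp
    | tmul b m =>
        simp only [TensorProduct.map_tmul, AlgHom.toLinearMap_apply, hψp,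
          LinearMap.id_coe, id_eq]
    | add x y hx hy => simp only [map_add, hx, hy]
  have hεψ : ∀ b : B₂, ε₁ (p₁ (ψ b)) = ε₂ (p₂ b) := by
    intro b
    rw [hψp]
    exact AlgHom.congr_fun hφε (p₂ b)
  -- projection of generators
  have hPt₁ : ∀ l : L, TensorProduct.map p₁.toLinearMap LinearMap.id ((1:B₁) ⊗ₜ[K] l)
      = (1:A₁) ⊗ₜ[K] l := by intro l; simp
  have hPt₂ : ∀ l : L, TensorProduct.map p₂.toLinearMap LinearMap.id ((1:B₂) ⊗ₜ[K] l)
      = (1:A₂) ⊗ₜ[K] l := by intro l; simp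
  -- the retraction of i₁ and extraction out of the kernel
  obtain ⟨q, hq⟩ := LinearMap.exists_leftInverse_of_injective i₁
    (LinearMap.ker_eq_bot.mpr hi₁_inj)
  have hq1 : q (i₁ 1) = 1 := by
    have := LinearMap.congr_fun hq 1
    simpa using this
  have hext : ∀ m : L, reduceTensor q (i₁ 1 ⊗ₜ[K] m) = m := by
    intro m; rw [reduceTensor_tmul, hq1, one_smul]
  have han : ∀ m m' : L, i₁ 1 ⊗ₜ[K] m = i₁ 1 ⊗ₜ[K] m' → m = m' := by
    intro m m' h
    have := congrArg (reduceTensor q) h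
    rwa [hext, hext] at this
  have hker : ∀ u : B₁ ⊗[K] L,
      TensorProduct.map p₁.toLinearMap LinearMap.id u = 0 →
      u = i₁ 1 ⊗ₜ[K] reduceTensor q u := by
    intro u hu
    obtain ⟨m, hm⟩ := ker_tensor_classify i₁ p₁ hexact₁ u hu
    rw [hm, hext]
  -- definition of the cochain g
  set g : L → L → L := fun x y =>
    reduceTensor q (br₁ ((1:B₁) ⊗ₜ[K] x) ((1:B₁) ⊗ₜ[K] y)
      - TensorProduct.map ψ.toLinearMap LinearMap.id
          (br₂ ((1:B₂) ⊗ₜ[K] x) ((1:B₂) ⊗ₜ[K] y))) with hgdef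
  have hg : ∀ x y : L,
      i₁ 1 ⊗ₜ[K] g x y
        = br₁ ((1:B₁) ⊗ₜ[K] x) ((1:B₁) ⊗ₜ[K] y)
          - TensorProduct.map ψ.toLinearMap LinearMap.id
              (br₂ ((1:B₂) ⊗ₜ[K] x) ((1:B₂) ⊗ₜ[K] y)) := by
    intro x y
    rw [hgdef]
    refine (hker _ ?_).symm
    rw [map_sub, hlift₁, hPΨ, hlift₂, hPt₁, hPt₁, hPt₂, hPt₂, hpushout, sub_self]
  -- bilinearity of g
  have hgaddl : ∀ x y z : L, g (x + y) z = g x z + g y z := by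
    intro x y z
    rw [hgdef]
    simp only [TensorProduct.tmul_add, hbr₁_add_left, hbr₂_add_left, map_add]
    rw [add_sub_add_comm, map_add]
  have hgaddr : ∀ x y z : L, g x (y + z) = g x y + g x z := by
    intro x y z
    rw [hgdef]
    simp only [TensorProduct.tmul_add, hbr₁_add_right, hbr₂_add_right, map_add]
    rw [add_sub_add_comm, map_add]
  have hgsmull : ∀ (c : K) (x y : L), g (c • x) y = c • g x y := by
    intro c x y
    rw [hgdef]
    simp only [TensorProduct.tmul_smul, hbr₁_ksmul_left, hbr₂_ksmul_left,
      LinearMap.map_smul]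
    rw [map_sub, map_sub, map_smul, map_smul, smul_sub]
  have hgsmulr : ∀ (c : K) (x y : L), g x (c • y) = c • g x y := by
    intro c x y
    rw [hgdef]
    simp only [TensorProduct.tmul_smul, hbr₁_ksmul_right, hbr₂_ksmul_right,
      LinearMap.map_smul]
    rw [map_sub, map_sub, map_smul, map_smul, smul_sub]
  have hg0r : ∀ l : L, g l 0 = 0 := by
    intro l
    have h := hgaddr l 0 0
    rw [add_zero] at h
    exact (add_eq_right.mp h.symm)
  have hg0l : ∀ l : L, g 0 l = 0 := by
    intro l
    have h := hgaddl 0 0 l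
    rw [add_zero] at h
    exact (add_eq_right.mp h.symm)
  -- Lemma A
  have hA : ∀ (l : L) (u : B₂ ⊗[K] L),
      br₁ ((1:B₁) ⊗ₜ[K] l) (TensorProduct.map ψ.toLinearMap LinearMap.id u)
        - TensorProduct.map ψ.toLinearMap LinearMap.id (br₂ ((1:B₂) ⊗ₜ[K] l) u)
        = i₁ 1 ⊗ₜ[K] g l (reduceTensor (ε₂.comp p₂).toLinearMap u) := by
    intro l u
    induction u using TensorProduct.induction_on with
    | zero =>
        simp only [map_zero, hbr₁_zero_right, hbr₂_zero_right, hg0r,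
          TensorProduct.tmul_zero, sub_zero]
    | tmul b m =>
        have hbm : b ⊗ₜ[K] m = b • ((1:B₂) ⊗ₜ[K] m) := by
          rw [TensorProduct.smul_tmul', smul_eq_mul, mul_one]
        have step : br₁ ((1:B₁) ⊗ₜ[K] l) (TensorProduct.map ψ.toLinearMap LinearMap.id (b ⊗ₜ[K] m))
            - TensorProduct.map ψ.toLinearMap LinearMap.id (br₂ ((1:B₂) ⊗ₜ[K] l) (b ⊗ₜ[K] m))
            = ψ b • (br₁ ((1:B₁) ⊗ₜ[K] l) ((1:B₁) ⊗ₜ[K] m)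
                - TensorProduct.map ψ.toLinearMap LinearMap.id
                    (br₂ ((1:B₂) ⊗ₜ[K] l) ((1:B₂) ⊗ₜ[K] m))) := by
          rw [smul_sub]
          congr 1
          · rw [hbm, hΨsmul, hbr₁_smul_right, hΨone]
          · rw [hbm, hbr₂_smul_right, hΨsmul]
        rw [step, ← hg, hbsm₁, hεψ, reduceTensor_tmul, ← hgsmulr]
        rfl
    | add x y hx hy =>
        simp only [map_add, hbr₁_add_right, hbr₂_add_right, hgaddr,
          TensorProduct.tmul_add]
        rw [← hx, ← hy]
        abel
  -- Lemma B
  have hB : ∀ (u : B₂ ⊗[K] L) (l : L),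
      br₁ (TensorProduct.map ψ.toLinearMap LinearMap.id u) ((1:B₁) ⊗ₜ[K] l)
        - TensorProduct.map ψ.toLinearMap LinearMap.id (br₂ u ((1:B₂) ⊗ₜ[K] l))
        = i₁ 1 ⊗ₜ[K] g (reduceTensor (ε₂.comp p₂).toLinearMap u) l := by
    intro u l
    induction u using TensorProduct.induction_on with
    | zero =>
        simp only [map_zero, hbr₁_zero_left, hbr₂_zero_left, hg0l,
          TensorProduct.tmul_zero, sub_zero]
    | tmul b m =>
        have hbm : b ⊗ₜ[K] m = b • ((1:B₂) ⊗ₜ[K] m) := by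
          rw [TensorProduct.smul_tmul', smul_eq_mul, mul_one]
        have step : br₁ (TensorProduct.map ψ.toLinearMap LinearMap.id (b ⊗ₜ[K] m)) ((1:B₁) ⊗ₜ[K] l)
            - TensorProduct.map ψ.toLinearMap LinearMap.id (br₂ (b ⊗ₜ[K] m) ((1:B₂) ⊗ₜ[K] l))
            = ψ b • (br₁ ((1:B₁) ⊗ₜ[K] m) ((1:B₁) ⊗ₜ[K] l)
                - TensorProduct.map ψ.toLinearMap LinearMap.id
                    (br₂ ((1:B₂) ⊗ₜ[K] m) ((1:B₂) ⊗ₜ[K] l))) := by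
          rw [smul_sub]
          congr 1
          · rw [hbm, hΨsmul, hbr₁_smul_left, hΨone]
          · rw [hbm, hbr₂_smul_left, hΨsmul]
        rw [step, ← hg, hbsm₁, hεψ, reduceTensor_tmul, ← hgsmull]
        rfl
    | add x y hx hy =>
        simp only [map_add, hbr₁_add_left, hbr₂_add_left, hgaddl,
          TensorProduct.tmul_add]
        rw [← hx, ← hy]
        abel
  -- r₂ of a product of generators
  have hr₂c : ∀ x y : L,
      reduceTensor (ε₂.comp p₂).toLinearMap
          (br₂ ((1:B₂) ⊗ₜ[K] x) ((1:B₂) ⊗ₜ[K] y)) = bll x y := by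
    intro x y
    rw [hr₂br, hr₂t, hr₂t]
  -- split br₁ on generators
  have hsplit : ∀ x y : L,
      br₁ ((1:B₁) ⊗ₜ[K] x) ((1:B₁) ⊗ₜ[K] y)
        = TensorProduct.map ψ.toLinearMap LinearMap.id
            (br₂ ((1:B₂) ⊗ₜ[K] x) ((1:B₂) ⊗ₜ[K] y))
          + i₁ 1 ⊗ₜ[K] g x y := by
    intro x y
    rw [hg]
    abel
  refine ⟨g, hgaddl, hgaddr, hgsmull, hgsmulr, ?_⟩
  intro l₁ l₂ l₃
  -- term-by-term computation
  have e1 : br₁ ((1:B₁) ⊗ₜ[K] l₁) (br₁ ((1:B₁) ⊗ₜ[K] l₂) ((1:B₁) ⊗ₜ[K] l₃))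
      = TensorProduct.map ψ.toLinearMap LinearMap.id
          (br₂ ((1:B₂) ⊗ₜ[K] l₁) (br₂ ((1:B₂) ⊗ₜ[K] l₂) ((1:B₂) ⊗ₜ[K] l₃)))
        + (i₁ 1 ⊗ₜ[K] g l₁ (bll l₂ l₃) + i₁ 1 ⊗ₜ[K] bll l₁ (g l₂ l₃)) := by
    have h1 := hA l₁ (br₂ ((1:B₂) ⊗ₜ[K] l₂) ((1:B₂) ⊗ₜ[K] l₃))
    rw [hr₂c] at h1
    have h2 : br₁ ((1:B₁) ⊗ₜ[K] l₁) (i₁ 1 ⊗ₜ[K] g l₂ l₃)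
        = i₁ 1 ⊗ₜ[K] bll l₁ (g l₂ l₃) := by
      rw [hbrR₁, hr₁t]
    rw [hsplit l₂ l₃, hbr₁_add_right, h2, ← h1]
    abel
  have e2 : br₁ (br₁ ((1:B₁) ⊗ₜ[K] l₁) ((1:B₁) ⊗ₜ[K] l₂)) ((1:B₁) ⊗ₜ[K] l₃)
      = TensorProduct.map ψ.toLinearMap LinearMap.id
          (br₂ (br₂ ((1:B₂) ⊗ₜ[K] l₁) ((1:B₂) ⊗ₜ[K] l₂)) ((1:B₂) ⊗ₜ[K] l₃))
        + (i₁ 1 ⊗ₜ[K] g (bll l₁ l₂) l₃ + i₁ 1 ⊗ₜ[K] bll (g l₁ l₂) l₃) := by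
    have h1 := hB (br₂ ((1:B₂) ⊗ₜ[K] l₁) ((1:B₂) ⊗ₜ[K] l₂)) l₃
    rw [hr₂c] at h1
    have h2 : br₁ (i₁ 1 ⊗ₜ[K] g l₁ l₂) ((1:B₁) ⊗ₜ[K] l₃)
        = i₁ 1 ⊗ₜ[K] bll (g l₁ l₂) l₃ := by
      rw [hII₁, hr₁t]
    rw [hsplit l₁ l₂, hbr₁_add_left, h2, ← h1]
    abel
  have e3 : br₁ (br₁ ((1:B₁) ⊗ₜ[K] l₁) ((1:B₁) ⊗ₜ[K] l₃)) ((1:B₁) ⊗ₜ[K] l₂)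
      = TensorProduct.map ψ.toLinearMap LinearMap.id
          (br₂ (br₂ ((1:B₂) ⊗ₜ[K] l₁) ((1:B₂) ⊗ₜ[K] l₃)) ((1:B₂) ⊗ₜ[K] l₂))
        + (i₁ 1 ⊗ₜ[K] g (bll l₁ l₃) l₂ + i₁ 1 ⊗ₜ[K] bll (g l₁ l₃) l₂) := by
    have h1 := hB (br₂ ((1:B₂) ⊗ₜ[K] l₁) ((1:B₂) ⊗ₜ[K] l₃)) l₂
    rw [hr₂c] at h1
    have h2 : br₁ (i₁ 1 ⊗ₜ[K] g l₁ l₃) ((1:B₁) ⊗ₜ[K] l₂)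
        = i₁ 1 ⊗ₜ[K] bll (g l₁ l₃) l₂ := by
      rw [hII₁, hr₁t]
    rw [hsplit l₁ l₃, hbr₁_add_left, h2, ← h1]
    abel
  apply han
  have hb2 : i₁ 1 ⊗ₜ[K] φb₂ l₁ l₂ l₃
      = TensorProduct.map ψ.toLinearMap LinearMap.id
          (br₂ ((1:B₂) ⊗ₜ[K] l₁) (br₂ ((1:B₂) ⊗ₜ[K] l₂) ((1:B₂) ⊗ₜ[K] l₃))
            - br₂ (br₂ ((1:B₂) ⊗ₜ[K] l₁) ((1:B₂) ⊗ₜ[K] l₂)) ((1:B₂) ⊗ₜ[K] l₃)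
            + br₂ (br₂ ((1:B₂) ⊗ₜ[K] l₁) ((1:B₂) ⊗ₜ[K] l₃)) ((1:B₂) ⊗ₜ[K] l₂)) := by
    rw [← hφb₂, hΨe]
  rw [TensorProduct.tmul_sub, hφb₁, hb2, map_add, map_sub, e1, e2, e3]
  simp only [TensorProduct.tmul_add, TensorProduct.tmul_sub]
  abel
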